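/- arXiv:1011.2234 — 7 statements merged into one kernel-verified Lean document; each statement's English description precedes it below -/
import Mathlib

section
/- The dual point θ̂ = Xβ̂ − y associated with any lasso minimizer β̂ is dual feasible: |x_j^T θ̂| ≤ λ for every j = 1,…,p. Moreover, if λ_max = max_j |x_j^T y| > 0 and 0 < λ ≤ λ_max, the scaled point θ_0 = −(λ/λ_max)·y is also dual feasible: |x_j^T θ_0| ≤ λ for every j. -/
open Finset Filter Topology

/-- The lasso objective `(1/2)‖y − Xβ‖₂² + λ‖β‖₁`. -/
noncomputable def lassoObj {N p : ℕ} (X : Matrix (Fin N) (Fin p) ℝ) (y : Fin N → ℝ)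
    (lam : ℝ) (b : Fin p → ℝ) : ℝ :=
  (1 / 2) * ∑ i, (y i - X.mulVec b i) ^ 2 + lam * ∑ j, |b j|

/-! Moving a lasso minimizer `β̂` by `t` along the coordinate `e_j` raises the smooth part by
`t gⱼ + t² ‖x_j‖² / 2`, where `gⱼ = x_jᵀ(Xβ̂ − y)`, and the penalty by at most `λ|t|`.
Minimality makes this sum nonnegative for every `t`; dividing by `|t|` and letting `t → 0±`
gives `|gⱼ| ≤ λ`. The second claim is `|x_jᵀ y| ≤ λ_max` rescaled by `λ / λ_max`. -/

theorem abs_le_of_forall_mul_add_sq_add_abs_nonneg {g a lam : ℝ}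
    (h : ∀ t, 0 ≤ t * g + t ^ 2 * a + lam * |t|) : |g| ≤ lam := by
  have hbound : ∀ s > 0, |g| ≤ lam + s * a := by
    intro s hs
    have hplus := h s
    have hminus := h (-s)
    rw [abs_of_pos hs] at hplus
    rw [abs_neg, abs_of_pos hs] at hminus
    refine abs_le'.2 ⟨le_of_mul_le_mul_left ?_ hs, le_of_mul_le_mul_left ?_ hs⟩ <;> nlinarith
  have hlim : Tendsto (fun s => lam + s * a) (𝓝[>] 0) (𝓝 lam) :=
    tendsto_nhdsWithin_of_tendsto_nhds <|
      (by fun_prop : Continuous fun s : ℝ => lam + s * a).tendsto' 0 lam (by simp)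
  exact ge_of_tendsto hlim (eventually_mem_nhdsWithin.mono hbound)

theorem sum_abs_add_single_le {ι : Type*} [Fintype ι] [DecidableEq ι] (b : ι → ℝ) (j : ι)
    (t : ℝ) : ∑ k, |(b + Pi.single j t : ι → ℝ) k| ≤ ∑ k, |b k| + |t| :=
  calc ∑ k, |(b + Pi.single j t : ι → ℝ) k| ≤ ∑ k, (|b k| + |(Pi.single j t : ι → ℝ) k|) :=
        sum_le_sum fun k _ => abs_add_le _ _
    _ = ∑ k, |b k| + |t| := by
        rw [sum_add_distrib]
        simp [Pi.single_apply, apply_ite]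

theorem sum_sq_sub_mulVec_add_single {m n : Type*} [Fintype m] [Fintype n] [DecidableEq n]
    (X : Matrix m n ℝ) (y : m → ℝ) (b : n → ℝ) (j : n) (t : ℝ) :
    ∑ i, (y i - X.mulVec (b + Pi.single j t) i) ^ 2 =
      ∑ i, (y i - X.mulVec b i) ^ 2 + 2 * t * ∑ i, X i j * (X.mulVec b i - y i) +
        t ^ 2 * ∑ i, X i j ^ 2 := by
  simp only [Matrix.mulVec_add, Pi.add_apply, Matrix.mulVec_single, Pi.smul_apply,
    Matrix.col_apply, MulOpposite.smul_eq_mul_unop, MulOpposite.unop_op]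
  rw [mul_sum, mul_sum, ← sum_add_distrib, ← sum_add_distrib]
  exact sum_congr rfl fun i _ => by ring

theorem lassoObj_add_single_le {N p : ℕ} (X : Matrix (Fin N) (Fin p) ℝ) (y : Fin N → ℝ)
    {lam : ℝ} (hlam : 0 ≤ lam) (b : Fin p → ℝ) (j : Fin p) (t : ℝ) :
    lassoObj X y lam (b + Pi.single j t) ≤
      lassoObj X y lam b + (t * ∑ i, X i j * (X.mulVec b i - y i) +
        t ^ 2 * ((∑ i, X i j ^ 2) / 2) + lam * |t|) := by
  have hpenalty := mul_le_mul_of_nonneg_left (sum_abs_add_single_le b j t) hlam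
  unfold lassoObj
  rw [sum_sq_sub_mulVec_add_single]
  linarith

theorem abs_sum_mul_residual_le_of_minimizer {N p : ℕ} {X : Matrix (Fin N) (Fin p) ℝ}
    {y : Fin N → ℝ} {lam : ℝ} (hlam : 0 ≤ lam) {bhat : Fin p → ℝ}
    (hmin : ∀ b, lassoObj X y lam bhat ≤ lassoObj X y lam b) (j : Fin p) :
    |∑ i, X i j * (X.mulVec bhat i - y i)| ≤ lam :=
  abs_le_of_forall_mul_add_sq_add_abs_nonneg (a := (∑ i, X i j ^ 2) / 2) fun t => by
    linarith [hmin (bhat + Pi.single j t), lassoObj_add_single_le X y hlam bhat j t]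

theorem abs_sum_mul_neg_div_mul_le {ι : Type*} [Fintype ι] (x y : ι → ℝ) {lam lmax : ℝ}
    (hlam : 0 ≤ lam) (hlmax : 0 < lmax) (hxy : |∑ i, x i * y i| ≤ lmax) :
    |∑ i, x i * (-(lam / lmax) * y i)| ≤ lam := by
  have hscale : 0 ≤ lam / lmax := div_nonneg hlam hlmax.le
  simp_rw [mul_left_comm (x _)]
  rw [← mul_sum, abs_mul, abs_neg, abs_of_nonneg hscale]
  calc lam / lmax * |∑ i, x i * y i| ≤ lam / lmax * lmax := mul_le_mul_of_nonneg_left hxy hscale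
    _ = lam := div_mul_cancel₀ lam hlmax.ne'

/-- The dual point `θ̂ = Xβ̂ − y` of a lasso minimizer `β̂` is dual feasible, and if
`λ_max = max_j |x_j^T y| > 0` and `0 < λ ≤ λ_max`, the point `θ₀ = −(λ/λ_max)·y`
is also dual feasible. -/
theorem lasso_dual_feasible {N p : ℕ} (X : Matrix (Fin N) (Fin p) ℝ) (y : Fin N → ℝ)
    (lam lmax : ℝ) (hlam : 0 < lam)
    (hlmax : IsGreatest (Set.range fun j : Fin p => |∑ i, X i j * y i|) lmax)
    (bhat : Fin p → ℝ)
    (hmin : ∀ b : Fin p → ℝ, lassoObj X y lam bhat ≤ lassoObj X y lam b) :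
    (∀ j : Fin p, |∑ i, X i j * (X.mulVec bhat i - y i)| ≤ lam) ∧
      (0 < lmax → lam ≤ lmax →
        ∀ j : Fin p, |∑ i, X i j * (-(lam / lmax) * y i)| ≤ lam) :=
  ⟨abs_sum_mul_residual_le_of_minimizer hlam.le hmin, fun hlmax_pos _ j =>
    abs_sum_mul_neg_div_mul_le _ _ hlam.le hlmax_pos (hlmax.2 ⟨j, rfl⟩)⟩
end

section
/- (SAFE rule correctness.) Let λ_max = max_j |x_j^T y| and suppose 0 < λ ≤ λ_max and y ≠ 0. If for some index j we have |x_j^T y| < λ − ‖x_j‖₂ ‖y‖₂ (λ_max − λ)/λ_max, then every minimizer β̂ of the lasso objective L(β) = (1/2)‖y − Xβ‖₂² + λ‖β‖₁ satisfies β̂_j = 0. -/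
/-!
The residual `r = y − Xβ̂` of a lasso minimizer satisfies the coordinatewise KKT identities
`β̂ₖ ⟨xₖ, r⟩ = λ|β̂ₖ|`, so `|⟨xⱼ, r⟩| ≥ λ` whenever `β̂ⱼ ≠ 0`. Summing them gives
`⟨Xβ̂, r⟩ = λ‖β̂‖₁ ≥ ⟨Xβ̂, θ⟩` for every dual feasible `θ` (`|⟨xₖ, θ⟩| ≤ λ` for all `k`), hence
`‖Xβ̂‖ ≤ ‖y − θ‖`: `r` is the projection of `y` onto the dual feasible set. Taking the feasible
point `θ = (λ/λ_max) y` bounds `‖Xβ̂‖` by `‖y‖ (λ_max − λ)/λ_max`, and Cauchy–Schwarz turns the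
SAFE condition into `|⟨xⱼ, r⟩| = |⟨xⱼ, y⟩ − ⟨xⱼ, Xβ̂⟩| < λ`.
-/

open Finset

open Matrix Filter Topology

lemma eq_zero_of_eventually_nonneg_mul_add_sq {a c : ℝ}
    (h : ∀ᶠ s in 𝓝 0, 0 ≤ s * a + s ^ 2 * c) : a = 0 := by
  have hmin : IsLocalMin (fun s : ℝ => s * a + s ^ 2 * c) 0 := by
    filter_upwards [h] with s hs
    simpa using hs
  have hderiv := ((hasDerivAt_id' (0 : ℝ)).mul_const a).fun_add
    ((hasDerivAt_pow 2 (0 : ℝ)).mul_const c)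
  norm_num at hderiv
  exact hmin.hasDerivAt_eq_zero hderiv

lemma abs_sum_mul_le_sqrt_mul_sqrt {ι : Type*} (s : Finset ι) (f g : ι → ℝ) :
    |∑ i ∈ s, f i * g i| ≤ √(∑ i ∈ s, f i ^ 2) * √(∑ i ∈ s, g i ^ 2) := by
  rw [← Real.sqrt_sq_eq_abs, ← Real.sqrt_mul (sum_nonneg fun i _ => sq_nonneg (f i))]
  exact Real.sqrt_le_sqrt (sum_mul_sq_le_sq_mul_sq s f g)

lemma sum_apply_update_eq {ι α M : Type*} [Fintype ι] [DecidableEq ι] [AddCommGroup M]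
    (f : ι → α → M) (b : ι → α) (k : ι) (t : α) :
    ∑ m, f m (Function.update b k t m) = ∑ m, f m (b m) + (f k t - f k (b k)) := by
  rw [sum_congr rfl fun m _ => Function.apply_update f b k t m, sum_update_of_mem (mem_univ k),
    ← add_sum_erase univ _ (mem_univ k), sdiff_singleton_eq_erase]
  abel

section Lasso

variable {N p : ℕ} {X : Matrix (Fin N) (Fin p) ℝ} {y : Fin N → ℝ} {lam : ℝ}

lemma lassoObj_update (b : Fin p → ℝ) (k : Fin p) (t : ℝ) :
    lassoObj X y lam (Function.update b k t) =
      lassoObj X y lam b - (t - b k) * (Xᵀ *ᵥ (y - X *ᵥ b)) k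
        + (t - b k) ^ 2 / 2 * ∑ i, X i k ^ 2 + lam * (|t| - |b k|) := by
  have hfit (i : Fin N) :
      (X *ᵥ Function.update b k t) i = (X *ᵥ b) i + (t - b k) * X i k := by
    simp only [mulVec, dotProduct]
    rw [sum_apply_update_eq (fun m v => X i m * v)]
    ring
  have hl1 : ∑ m, |Function.update b k t m| = ∑ m, |b m| + (|t| - |b k|) :=
    sum_apply_update_eq (fun _ => abs) b k t
  have hsq (i : Fin N) : (y i - (X *ᵥ b) i - (t - b k) * X i k) ^ 2 =
      (y i - (X *ᵥ b) i) ^ 2 - 2 * (t - b k) * (X i k * (y - X *ᵥ b) i)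
        + (t - b k) ^ 2 * X i k ^ 2 := by
    simp only [Pi.sub_apply]
    ring
  simp only [lassoObj, hfit, hl1, ← sub_sub, hsq, sum_add_distrib, sum_sub_distrib, ← mul_sum]
  change _ = _ - _ * ∑ i, X i k * (y - X *ᵥ b) i + _ + _
  ring

variable {bhat : Fin p → ℝ}

lemma mul_correlation_residual_eq (hmin : ∀ b, lassoObj X y lam bhat ≤ lassoObj X y lam b)
    (k : Fin p) : bhat k * (Xᵀ *ᵥ (y - X *ᵥ bhat)) k = lam * |bhat k| := by
  set t := bhat k
  set A := (Xᵀ *ᵥ (y - X *ᵥ bhat)) k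
  set Q := ∑ i, X i k ^ 2
  suffices lam * |t| - t * A = 0 by linarith
  -- rescale the `k`-th coordinate by `1 + s`; for `s > -1` the objective is quadratic in `s`
  refine eq_zero_of_eventually_nonneg_mul_add_sq (c := t ^ 2 * Q / 2) ?_
  filter_upwards [Ioo_mem_nhds (neg_lt_zero.mpr one_pos) one_pos] with s hs
  have h := hmin (Function.update bhat k ((1 + s) * t))
  rw [lassoObj_update, abs_mul, abs_of_pos (by linarith [hs.1] : 0 < 1 + s)] at h
  linarith [show s * (lam * |t| - t * A) + s ^ 2 * (t ^ 2 * Q / 2) =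
    -(((1 + s) * t - t) * A) + ((1 + s) * t - t) ^ 2 / 2 * Q
      + lam * ((1 + s) * |t| - |t|) by ring]

lemma le_abs_correlation_residual (hmin : ∀ b, lassoObj X y lam bhat ≤ lassoObj X y lam b)
    {k : Fin p} (hk : bhat k ≠ 0) : lam ≤ |(Xᵀ *ᵥ (y - X *ᵥ bhat)) k| := by
  refine le_of_mul_le_mul_left ?_ (abs_pos.mpr hk)
  calc |bhat k| * lam = bhat k * (Xᵀ *ᵥ (y - X *ᵥ bhat)) k := by
        rw [mul_correlation_residual_eq hmin k, mul_comm]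
    _ ≤ |bhat k| * |(Xᵀ *ᵥ (y - X *ᵥ bhat)) k| := by
        rw [← abs_mul]
        exact le_abs_self _

lemma fit_sq_le_of_dual_feasible (hmin : ∀ b, lassoObj X y lam bhat ≤ lassoObj X y lam b)
    {θ : Fin N → ℝ} (hθ : ∀ k, |(Xᵀ *ᵥ θ) k| ≤ lam) :
    ∑ i, (X *ᵥ bhat) i ^ 2 ≤ ∑ i, (y i - θ i) ^ 2 := by
  set r := y - X *ᵥ bhat
  have hadjoint (v : Fin N → ℝ) : (X *ᵥ bhat) ⬝ᵥ v = ∑ k, bhat k * (Xᵀ *ᵥ v) k := by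
    rw [dotProduct_comm, ← dotProduct_transpose_mulVec]
    rfl
  have hdual : (X *ᵥ bhat) ⬝ᵥ θ ≤ (X *ᵥ bhat) ⬝ᵥ r := by
    rw [hadjoint, hadjoint]
    refine sum_le_sum fun k _ => ?_
    calc bhat k * (Xᵀ *ᵥ θ) k ≤ |bhat k| * |(Xᵀ *ᵥ θ) k| := by
          rw [← abs_mul]
          exact le_abs_self _
      _ ≤ |bhat k| * lam := by gcongr; exact hθ k
      _ = bhat k * (Xᵀ *ᵥ r) k := by rw [mul_correlation_residual_eq hmin k, mul_comm]
  have hexpand (i : Fin N) : (y i - θ i) ^ 2 = (X *ᵥ bhat) i ^ 2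
      + 2 * ((X *ᵥ bhat) i * r i - (X *ᵥ bhat) i * θ i) + (r i - θ i) ^ 2 := by
    simp only [r, Pi.sub_apply]
    ring
  rw [sum_congr rfl fun i _ => hexpand i, sum_add_distrib, sum_add_distrib, ← mul_sum,
    sum_sub_distrib]
  have hdual' : ∑ i, (X *ᵥ bhat) i * θ i ≤ ∑ i, (X *ᵥ bhat) i * r i := hdual
  linarith [sum_nonneg fun i (_ : i ∈ univ) => sq_nonneg (r i - θ i)]

lemma abs_correlation_residual_le_safe
    (hmin : ∀ b, lassoObj X y lam bhat ≤ lassoObj X y lam b) {lmax : ℝ} (hlam : 0 < lam)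
    (hle : lam ≤ lmax) (hlmax : ∀ k, |(Xᵀ *ᵥ y) k| ≤ lmax) (j : Fin p) :
    |(Xᵀ *ᵥ (y - X *ᵥ bhat)) j| ≤
      |(Xᵀ *ᵥ y) j| + √(∑ i, X i j ^ 2) * √(∑ i, y i ^ 2) * (lmax - lam) / lmax := by
  have hlmax0 : 0 < lmax := hlam.trans_le hle
  set c := lam / lmax
  have hfeas (k : Fin p) : |(Xᵀ *ᵥ (c • y)) k| ≤ lam := by
    rw [mulVec_smul, Pi.smul_apply, smul_eq_mul, abs_mul, abs_of_pos (by positivity)]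
    calc c * |(Xᵀ *ᵥ y) k| ≤ c * lmax := by gcongr; exact hlmax k
      _ = lam := div_mul_cancel₀ _ hlmax0.ne'
  have hdist : ∑ i, (y i - (c • y) i) ^ 2 = ((lmax - lam) / lmax) ^ 2 * ∑ i, y i ^ 2 := by
    rw [mul_sum]
    refine sum_congr rfl fun i _ => ?_
    simp only [Pi.smul_apply, smul_eq_mul, c]
    field_simp
  have hfit : √(∑ i, (X *ᵥ bhat) i ^ 2) ≤ (lmax - lam) / lmax * √(∑ i, y i ^ 2) := by
    have h := Real.sqrt_le_sqrt (fit_sq_le_of_dual_feasible hmin hfeas)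
    rwa [hdist, Real.sqrt_mul (sq_nonneg _),
      Real.sqrt_sq (div_nonneg (sub_nonneg.2 hle) hlmax0.le)] at h
  calc |(Xᵀ *ᵥ (y - X *ᵥ bhat)) j| = |(Xᵀ *ᵥ y) j - ∑ i, X i j * (X *ᵥ bhat) i| := by
        rw [mulVec_sub]
        rfl
    _ ≤ |(Xᵀ *ᵥ y) j| + |∑ i, X i j * (X *ᵥ bhat) i| := abs_sub _ _
    _ ≤ |(Xᵀ *ᵥ y) j| + √(∑ i, X i j ^ 2) * ((lmax - lam) / lmax * √(∑ i, y i ^ 2)) := by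
        gcongr
        exact (abs_sum_mul_le_sqrt_mul_sqrt univ (fun i => X i j) (X *ᵥ bhat)).trans
          (by gcongr)
    _ = |(Xᵀ *ᵥ y) j| + √(∑ i, X i j ^ 2) * √(∑ i, y i ^ 2) * (lmax - lam) / lmax := by ring

end Lasso

theorem safe_rule_correct_general {N p : ℕ} (X : Matrix (Fin N) (Fin p) ℝ) (y : Fin N → ℝ)
    (lam lmax : ℝ) (hlam : 0 < lam) (hle : lam ≤ lmax)
    (hlmax : IsGreatest (Set.range fun j : Fin p => |∑ i, X i j * y i|) lmax)
    (j : Fin p)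
    (hsafe : |∑ i, X i j * y i| <
      lam - Real.sqrt (∑ i, X i j ^ 2) * Real.sqrt (∑ i, y i ^ 2) * (lmax - lam) / lmax) :
    ∀ bhat : Fin p → ℝ,
      (∀ b : Fin p → ℝ, lassoObj X y lam bhat ≤ lassoObj X y lam b) → bhat j = 0 := by
  intro bhat hmin
  by_contra hj
  have hlower := le_abs_correlation_residual hmin hj
  have hupper := abs_correlation_residual_le_safe hmin hlam hle (fun k => hlmax.2 ⟨k, rfl⟩) j
  change |(Xᵀ *ᵥ y) j| < _ at hsafe
  linarith

/-- SAFE rule correctness: if `|x_j^T y| < λ − ‖x_j‖₂‖y‖₂(λ_max − λ)/λ_max`, then every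
lasso minimizer `β̂` has `β̂_j = 0`. -/
theorem safe_rule_correct {N p : ℕ} (X : Matrix (Fin N) (Fin p) ℝ) (y : Fin N → ℝ)
    (lam lmax : ℝ) (hlam : 0 < lam) (hle : lam ≤ lmax) (hy : y ≠ 0)
    (hlmax : IsGreatest (Set.range fun j : Fin p => |∑ i, X i j * y i|) lmax)
    (j : Fin p)
    (hsafe : |∑ i, X i j * y i| <
      lam - Real.sqrt (∑ i, X i j ^ 2) * Real.sqrt (∑ i, y i ^ 2) * (lmax - lam) / lmax) :
    ∀ bhat : Fin p → ℝ,
      (∀ b : Fin p → ℝ, lassoObj X y lam bhat ≤ lassoObj X y lam b) → bhat j = 0 :=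
  safe_rule_correct_general X y lam lmax hlam hle hlmax j hsafe
end

section
/- (Soundness of the strong sequential rule under the unit slope condition.) Let β̂ : (0,∞) → ℝ^p be a solution path, i.e., for each μ > 0 the vector β̂(μ) minimizes the lasso objective (1/2)‖y − Xβ‖₂² + μ‖β‖₁, and define c_j(μ) = x_j^T(y − Xβ̂(μ)). Let 0 < λ ≤ λ₀. If the function μ ↦ c_j(μ) is 1-Lipschitz on [λ, λ₀] and |x_j^T(y − Xβ̂(λ₀))| < 2λ − λ₀, then β̂(λ)_j = 0. -/
open Finset

/-!
At a lasso minimizer `β`, moving the `j`-th coordinate by `t` changes the objective by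
`-t c_j + (t²/2)‖x_j‖² + λ(|β_j + t| - |β_j|)`. Shrinking `β_j` towards `0` (`t = -s β_j`, `s ↓ 0`)
gives `λ|β_j| ≤ β_j c_j ≤ |β_j||c_j|`, so `|c_j| < λ` forces `β_j = 0`. The unit slope condition
and the triangle inequality give `|c_j(λ)| ≤ (λ₀ - λ) + |c_j(λ₀)| < λ`.
-/

open Filter Topology

theorem nonneg_of_forall_mul_add_sq_mul_nonneg {u v : ℝ}
    (h : ∀ s ∈ Set.Ioc (0 : ℝ) 1, 0 ≤ s * u + s ^ 2 * v) : 0 ≤ u := by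
  have hlim : Tendsto (fun s => u + s * v) (𝓝[>] 0) (𝓝 u) := by
    simpa using (tendsto_const_nhds.add (tendsto_id.mul_const v)).mono_left
      (nhdsWithin_le_nhds (a := (0 : ℝ)))
  refine ge_of_tendsto hlim ?_
  filter_upwards [Ioc_mem_nhdsGT zero_lt_one] with s hs
  have hsu := h s hs
  exact nonneg_of_mul_nonneg_right (by linarith) hs.1

theorem eq_zero_of_forall_quadratic_add_abs_nonneg {a c A lam : ℝ}
    (h : ∀ t, 0 ≤ -t * c + t ^ 2 / 2 * A + lam * (|a + t| - |a|)) (hc : |c| < lam) :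
    a = 0 := by
  have hmargin : 0 ≤ a * c - lam * |a| := by
    refine nonneg_of_forall_mul_add_sq_mul_nonneg (v := a ^ 2 * A / 2) fun s hs => ?_
    have hshrink : |a + -(s * a)| = (1 - s) * |a| := by
      rw [show a + -(s * a) = (1 - s) * a by ring, abs_mul, abs_of_nonneg (by linarith [hs.2])]
    have := h (-(s * a))
    rw [hshrink] at this
    linarith
  have hac : a * c ≤ |a| * |c| := by rw [← abs_mul]; exact le_abs_self _
  have : (lam - |c|) * |a| ≤ 0 := by linarith
  exact abs_nonpos_iff.mp (nonpos_of_mul_nonpos_right this (by linarith))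

def lassoCorr {N p : ℕ} (X : Matrix (Fin N) (Fin p) ℝ) (y : Fin N → ℝ) (b : Fin p → ℝ)
    (j : Fin p) : ℝ :=
  ∑ i, X i j * (y i - X.mulVec b i)

theorem sum_abs_add_single {p : ℕ} (b : Fin p → ℝ) (j : Fin p) (t : ℝ) :
    ∑ k, |(b + Pi.single j t : Fin p → ℝ) k| = ∑ k, |b k| + (|b j + t| - |b j|) := by
  rw [← sub_eq_iff_eq_add', ← Finset.sum_sub_distrib, Fintype.sum_eq_single j fun k hk => by
    simp [hk]]
  simp

theorem lassoObj_add_single {N p : ℕ} (X : Matrix (Fin N) (Fin p) ℝ) (y : Fin N → ℝ)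
    (lam : ℝ) (b : Fin p → ℝ) (j : Fin p) (t : ℝ) :
    lassoObj X y lam (b + Pi.single j t) = lassoObj X y lam b - t * lassoCorr X y b j
      + t ^ 2 / 2 * ∑ i, X i j ^ 2 + lam * (|b j + t| - |b j|) := by
  have hres : ∀ i, (y i - X.mulVec (b + Pi.single j t) i) ^ 2
      = (y i - X.mulVec b i) ^ 2 - 2 * t * (X i j * (y i - X.mulVec b i)) + t ^ 2 * X i j ^ 2 := by
    intro i
    simp only [Matrix.mulVec_add, Matrix.mulVec_single, op_smul_eq_smul, Pi.add_apply,
      Pi.smul_apply, Matrix.col_apply, smul_eq_mul]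
    ring
  simp only [lassoObj, lassoCorr, sum_abs_add_single, hres, Finset.sum_add_distrib,
    Finset.sum_sub_distrib, ← Finset.mul_sum]
  ring

theorem eq_zero_of_abs_lassoCorr_lt {N p : ℕ} {X : Matrix (Fin N) (Fin p) ℝ} {y : Fin N → ℝ}
    {lam : ℝ} {b : Fin p → ℝ} (hmin : ∀ b', lassoObj X y lam b ≤ lassoObj X y lam b')
    {j : Fin p} (hcorr : |lassoCorr X y b j| < lam) : b j = 0 :=
  eq_zero_of_forall_quadratic_add_abs_nonneg (A := ∑ i, X i j ^ 2) (fun t => by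
    have := hmin (b + Pi.single j t)
    rw [lassoObj_add_single] at this
    linarith) hcorr

/-- Soundness of the strong sequential rule under the unit slope condition: if `β̂(μ)`
is a lasso solution path, `c_j(μ) = x_j^T(y − Xβ̂(μ))` is 1-Lipschitz on `[λ, λ₀]`, and
`|x_j^T(y − Xβ̂(λ₀))| < 2λ − λ₀`, then `β̂(λ)_j = 0`. -/
theorem strong_sequential_rule_sound {N p : ℕ} (X : Matrix (Fin N) (Fin p) ℝ)
    (y : Fin N → ℝ) (bhat : ℝ → Fin p → ℝ)
    (hpath : ∀ mu : ℝ, 0 < mu →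
      ∀ b : Fin p → ℝ, lassoObj X y mu (bhat mu) ≤ lassoObj X y mu b)
    (lam lam0 : ℝ) (hlam : 0 < lam) (hle : lam ≤ lam0) (j : Fin p)
    (hlip : ∀ a ∈ Set.Icc lam lam0, ∀ b ∈ Set.Icc lam lam0,
      |(∑ i, X i j * (y i - X.mulVec (bhat a) i)) -
        (∑ i, X i j * (y i - X.mulVec (bhat b) i))| ≤ |a - b|)
    (hrule : |∑ i, X i j * (y i - X.mulVec (bhat lam0) i)| < 2 * lam - lam0) :
    bhat lam j = 0 := by
  refine eq_zero_of_abs_lassoCorr_lt (hpath lam hlam) ?_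
  have hstep : |lassoCorr X y (bhat lam) j - lassoCorr X y (bhat lam0) j| ≤ lam0 - lam := by
    simpa [lassoCorr, abs_of_nonpos (sub_nonpos.mpr hle)] using
      hlip lam ⟨le_rfl, hle⟩ lam0 ⟨hle, le_rfl⟩
  calc |lassoCorr X y (bhat lam) j|
      ≤ |lassoCorr X y (bhat lam) j - lassoCorr X y (bhat lam0) j|
        + |lassoCorr X y (bhat lam0) j| := sub_le_iff_le_add.mp (abs_sub_abs_le_abs_sub _ _)
    _ < (lam0 - lam) + (2 * lam - lam0) := add_lt_add_of_le_of_lt hstep hrule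
    _ = lam := by ring
end

section
/- (Equi-correlation model, diagonal dominance.) Let p ≥ 1, let 0 ≤ r < 1, and let G = (1−r)·I + r·𝟙𝟙^T be the p×p equi-correlation matrix. Then G^{-1} is diagonally dominant: for every row i, |(G^{-1})_{ii}| ≥ Σ_{j ≠ i} |(G^{-1})_{ij}|. -/
/-!
Writing `J = 𝟙𝟙ᵀ`, the identity `J * J = p • J` shows that `a • 1 + b • J` is inverted by
`a⁻¹ • (1 - t • J)` with `t = b / (a + p b)`. For `G` this gives `t = r / (1 - r + p r)`, so
`0 ≤ t` and `p t ≤ 1`; then each row of `1 - t • J` has diagonal entry `1 - t` and `p - 1`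
off-diagonal entries `-t`, and `(p - 1) t ≤ 1 - t` is exactly `p t ≤ 1`.
-/

open Finset Matrix

namespace Matrix

variable {n : Type*} [Fintype n]

theorem of_one_mul_of_one {α : Type*} [NonAssocSemiring α] :
    (of fun _ _ => 1 : Matrix n n α) * of (fun _ _ => 1) = (Fintype.card n : α) • of fun _ _ => 1 := by
  ext i j
  simp [mul_apply]

variable [DecidableEq n]

theorem smul_one_add_smul_of_one_mul_one_sub_smul_of_one {K : Type*} [Field K] (a b t : K) :
    (a • 1 + b • of fun _ _ => 1 : Matrix n n K) * (1 - t • of fun _ _ => 1) =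
      a • 1 + (b - t * (a + Fintype.card n * b)) • of fun _ _ => 1 := by
  simp only [add_mul, mul_sub, Matrix.mul_one, Matrix.one_mul, smul_mul_smul_comm,
    of_one_mul_of_one, smul_smul]
  module

theorem inv_smul_one_add_smul_of_one {K : Type*} [Field K] {a b : K} (ha : a ≠ 0)
    (hc : a + Fintype.card n * b ≠ 0) :
    (a • 1 + b • of fun _ _ => 1 : Matrix n n K)⁻¹ =
      a⁻¹ • (1 - (b / (a + Fintype.card n * b)) • of fun _ _ => 1) := by
  refine inv_eq_right_inv ?_
  rw [mul_smul_comm, smul_one_add_smul_of_one_mul_one_sub_smul_of_one, div_mul_cancel₀ _ hc,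
    sub_self, zero_smul, add_zero, smul_smul, inv_mul_cancel₀ ha, one_smul]

theorem sum_abs_erase_le_abs_of_one_sub_smul_of_one (s : ℝ) {t : ℝ} (ht : 0 ≤ t)
    (htn : Fintype.card n * t ≤ 1) (i : n) :
    ∑ j ∈ univ.erase i, |(s • (1 - t • of fun _ _ => 1 : Matrix n n ℝ)) i j| ≤
      |(s • (1 - t • of fun _ _ => 1 : Matrix n n ℝ)) i i| := by
  have hn : 1 ≤ Fintype.card n := card_pos.mpr ⟨i, mem_univ i⟩
  have hcard : ((univ.erase i).card : ℝ) = Fintype.card n - 1 := by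
    rw [card_erase_of_mem (mem_univ i), card_univ, Nat.cast_sub hn, Nat.cast_one]
  have hoff : ∀ j ∈ univ.erase i,
      |(s • (1 - t • of fun _ _ => 1 : Matrix n n ℝ)) i j| = |s| * t := by
    intro j hj
    simp [one_apply_ne' (ne_of_mem_erase hj), abs_mul, abs_of_nonneg ht]
  have ht1 : t ≤ 1 := le_trans (le_mul_of_one_le_left ht (by exact_mod_cast hn)) htn
  rw [sum_congr rfl hoff, sum_const, nsmul_eq_mul, hcard]
  simp only [smul_apply, sub_apply, one_apply_eq, of_apply, smul_eq_mul, mul_one, abs_mul,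
    abs_of_nonneg (sub_nonneg.mpr ht1)]
  calc (Fintype.card n - 1) * (|s| * t) = |s| * (Fintype.card n * t - t) := by ring
    _ ≤ |s| * (1 - t) := by gcongr

end Matrix

theorem equicorrelation_inverse_diagonally_dominant_general (p : ℕ) (r : ℝ)
    (hr0 : 0 ≤ r) (hr1 : r < 1) (G : Matrix (Fin p) (Fin p) ℝ)
    (hG : G = (1 - r) • (1 : Matrix (Fin p) (Fin p) ℝ) +
      r • Matrix.of (fun _ _ : Fin p => (1 : ℝ))) :
    ∀ i : Fin p, ∑ j ∈ Finset.univ.erase i, |G⁻¹ i j| ≤ |G⁻¹ i i| := by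
  have hc : 0 < 1 - r + p * r := by positivity
  rw [hG, inv_smul_one_add_smul_of_one (by linarith) (by simpa using hc.ne')]
  refine sum_abs_erase_le_abs_of_one_sub_smul_of_one _ (by positivity) ?_
  rw [Fintype.card_fin, mul_div_assoc', div_le_one hc]
  linarith

/-- Equi-correlation model: the inverse of `G = (1−r)I + r𝟙𝟙ᵀ` with `0 ≤ r < 1` is
diagonally dominant. -/
theorem equicorrelation_inverse_diagonally_dominant (p : ℕ) (hp : 1 ≤ p) (r : ℝ)
    (hr0 : 0 ≤ r) (hr1 : r < 1) (G : Matrix (Fin p) (Fin p) ℝ)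
    (hG : G = (1 - r) • (1 : Matrix (Fin p) (Fin p) ℝ) +
      r • Matrix.of (fun _ _ : Fin p => (1 : ℝ))) :
    ∀ i : Fin p, ∑ j ∈ Finset.univ.erase i, |G⁻¹ i j| ≤ |G⁻¹ i i| :=
  equicorrelation_inverse_diagonally_dominant_general p r hr0 hr1 G hG
end

section
/- (Elastic net as an augmented lasso.) Let X be a real N×p matrix, y ∈ ℝ^N, and λ₂ ≥ 0. Define the (N+p)×p matrix X* by stacking X on top of √λ₂·I (the p×p identity scaled by √λ₂), and define y* ∈ ℝ^{N+p} by stacking y on top of the zero vector in ℝ^p. Then for every β ∈ ℝ^p, (1/2)‖y* − X*β‖₂² = (1/2)‖y − Xβ‖₂² + (1/2)λ₂‖β‖₂². Consequently, for any λ₁ ≥ 0, β minimizes the elastic net objective (1/2)‖y − Xβ‖₂² + (1/2)λ₂‖β‖₂² + λ₁‖β‖₁ if and only if β minimizes the lasso objective (1/2)‖y* − X*β‖₂² + λ₁‖β‖₁. -/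
open Finset Matrix

section StackedLeastSquares

variable {R : Type*} [CommRing R] {m m' n : Type*} [Fintype m] [Fintype m'] [Fintype n]

theorem sum_sq_sub_fromRows_mulVec (X : Matrix m n R) (Y : Matrix m' n R) (y : m → R)
    (y' : m' → R) (b : n → R) :
    ∑ i, (Sum.elim y y' i - (fromRows X Y *ᵥ b) i) ^ 2 =
      ∑ i, (y i - (X *ᵥ b) i) ^ 2 + ∑ i, (y' i - (Y *ᵥ b) i) ^ 2 := by
  simp only [Fintype.sum_sum_type, fromRows_mulVec, Sum.elim_inl, Sum.elim_inr]

theorem sum_sq_zero_sub_smul_one_mulVec [DecidableEq n] (c : R) (b : n → R) :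
    ∑ j, ((0 : n → R) j - ((c • (1 : Matrix n n R)) *ᵥ b) j) ^ 2 =
      c ^ 2 * ∑ j, b j ^ 2 := by
  simp only [smul_mulVec, one_mulVec, Pi.zero_apply, Pi.smul_apply, smul_eq_mul, zero_sub,
    neg_sq, mul_pow, mul_sum]

end StackedLeastSquares

/-- Elastic net as an augmented lasso: with `X* = [X; √λ₂·I]` and `y* = [y; 0]`,
`(1/2)‖y* − X*β‖₂² = (1/2)‖y − Xβ‖₂² + (1/2)λ₂‖β‖₂²`, and hence `β` minimizes the
elastic net objective iff it minimizes the lasso objective for the augmented data. -/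
theorem elastic_net_as_augmented_lasso {N p : ℕ} (X : Matrix (Fin N) (Fin p) ℝ)
    (y : Fin N → ℝ) (l2 : ℝ) (hl2 : 0 ≤ l2)
    (Xstar : Matrix (Fin N ⊕ Fin p) (Fin p) ℝ)
    (hXstar : Xstar = Matrix.fromRows X (Real.sqrt l2 • (1 : Matrix (Fin p) (Fin p) ℝ)))
    (ystar : Fin N ⊕ Fin p → ℝ) (hystar : ystar = Sum.elim y 0) :
    (∀ b : Fin p → ℝ,
      (1 / 2) * ∑ i, (ystar i - Xstar.mulVec b i) ^ 2 =
        (1 / 2) * ∑ i, (y i - X.mulVec b i) ^ 2 + (1 / 2) * l2 * ∑ j, b j ^ 2) ∧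
    (∀ l1 : ℝ, 0 ≤ l1 → ∀ b : Fin p → ℝ,
      (∀ b' : Fin p → ℝ,
          (1 / 2) * ∑ i, (y i - X.mulVec b i) ^ 2 + (1 / 2) * l2 * ∑ j, b j ^ 2
            + l1 * ∑ j, |b j| ≤
          (1 / 2) * ∑ i, (y i - X.mulVec b' i) ^ 2 + (1 / 2) * l2 * ∑ j, b' j ^ 2
            + l1 * ∑ j, |b' j|) ↔
      (∀ b' : Fin p → ℝ,
          (1 / 2) * ∑ i, (ystar i - Xstar.mulVec b i) ^ 2 + l1 * ∑ j, |b j| ≤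
          (1 / 2) * ∑ i, (ystar i - Xstar.mulVec b' i) ^ 2 + l1 * ∑ j, |b' j|)) := by
  have augmented_loss (b : Fin p → ℝ) :
      (1 / 2) * ∑ i, (ystar i - (Xstar *ᵥ b) i) ^ 2 =
        (1 / 2) * ∑ i, (y i - (X *ᵥ b) i) ^ 2 + (1 / 2) * l2 * ∑ j, b j ^ 2 := by
    rw [hXstar, hystar, sum_sq_sub_fromRows_mulVec, sum_sq_zero_sub_smul_one_mulVec,
      Real.sq_sqrt hl2]
    ring
  exact ⟨augmented_loss, fun l1 _ b => by simp only [augmented_loss]⟩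
end

section
/- (KKT exclusion rule for ℓ₁-penalized logistic regression.) Let X be a real N×p matrix with rows x_1,…,x_N and columns denoted x^{(j)}, let y ∈ {0,1}^N, and let λ > 0. For (β₀, β) ∈ ℝ × ℝ^p let p_i(β₀, β) = 1/(1 + exp(−β₀ − x_i^T β)) and define the penalized negative log-likelihood ℓ(β₀, β) = −Σ_{i=1}^N [ y_i log p_i(β₀,β) + (1−y_i) log(1 − p_i(β₀,β)) ] + λ‖β‖₁. If (β̂₀, β̂) minimizes ℓ and for some index j we have |Σ_{i=1}^N X_{ij}(y_i − p_i(β̂₀, β̂))| < λ, then β̂_j = 0. -/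
open Finset

/-- The logistic probability `p_i(β₀, β) = 1/(1 + exp(−β₀ − x_iᵀβ))`. -/
noncomputable def logisticProb {N p : ℕ} (X : Matrix (Fin N) (Fin p) ℝ)
    (b0 : ℝ) (b : Fin p → ℝ) (i : Fin N) : ℝ :=
  1 / (1 + Real.exp (-b0 - ∑ j, X i j * b j))

/-- The ℓ₁-penalized negative log-likelihood for logistic regression. -/
noncomputable def logisticObj {N p : ℕ} (X : Matrix (Fin N) (Fin p) ℝ)
    (y : Fin N → ℝ) (lam : ℝ) (b0 : ℝ) (b : Fin p → ℝ) : ℝ :=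
  -(∑ i, (y i * Real.log (logisticProb X b0 b i) +
      (1 - y i) * Real.log (1 - logisticProb X b0 b i))) + lam * ∑ j, |b j|

/-!
Fix every coordinate but `β_j`. Along that line the objective is `g(t) + λ|t| + const`, and with
`σ(c) = 1 / (1 + e^{-c})` the identity
`-(y log σ(c) + (1 - y) log(1 - σ(c))) = log(1 + e^{-c}) + (1 - y) c`
shows that the loss `g` is smooth with `g'(β̂_j) = -∑ᵢ X_{ij} (yᵢ - pᵢ(β̂₀, β̂))`. If `β̂_j ≠ 0`,
then `|t|` is differentiable at `β̂_j` with derivative `sign β̂_j`, so Fermat's rule forces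
`|g'(β̂_j)| = |λ| ≥ λ`.
-/

open Function

theorem abs_eq_abs_of_isLocalMin_add_mul_abs {f : ℝ → ℝ} {f' t₀ lam : ℝ}
    (hmin : IsLocalMin (fun t => f t + lam * |t|) t₀) (hf : HasDerivAt f f' t₀)
    (ht₀ : t₀ ≠ 0) : |f'| = |lam| := by
  have hcrit : f' + lam * SignType.sign t₀ = 0 :=
    hmin.hasDerivAt_eq_zero (hf.add ((hasDerivAt_abs ht₀).const_mul lam))
  rw [eq_neg_of_add_eq_zero_left hcrit, abs_neg, abs_mul]
  rcases ht₀.lt_or_gt with h | h <;> simp [h]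

theorem sum_update_eq_add_sum_erase {ι β M : Type*} [Fintype ι] [DecidableEq ι]
    [AddCommMonoid M] (f : ι → β → M) (b : ι → β) (j : ι) (t : β) :
    ∑ k, f k (update b j t k) = f j t + ∑ k ∈ univ.erase j, f k (b k) := by
  rw [← add_sum_erase _ _ (mem_univ j), update_self]
  congr 1
  exact sum_congr rfl fun k hk => by rw [update_of_ne (ne_of_mem_erase hk)]

theorem neg_log_likelihood_sigmoid (c y : ℝ) :
    -(y * Real.log (1 / (1 + Real.exp (-c))) +
      (1 - y) * Real.log (1 - 1 / (1 + Real.exp (-c)))) =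
    Real.log (1 + Real.exp (-c)) + (1 - y) * c := by
  have hE : 0 < Real.exp (-c) := Real.exp_pos _
  have hcompl : 1 - 1 / (1 + Real.exp (-c)) = Real.exp (-c) / (1 + Real.exp (-c)) := by
    field_simp; ring
  rw [hcompl, Real.log_div hE.ne' (by positivity), Real.log_exp, one_div, Real.log_inv]
  ring

theorem hasDerivAt_log_one_add_exp_neg_add_mul (y c : ℝ) :
    HasDerivAt (fun s => Real.log (1 + Real.exp (-s)) + (1 - y) * s)
      (-(y - 1 / (1 + Real.exp (-c)))) c := by
  have hpos : 0 < 1 + Real.exp (-c) := by positivity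
  have hlog := (((hasDerivAt_neg c).exp).const_add 1).log hpos.ne'
  refine (hlog.fun_add ((hasDerivAt_id c).const_mul (1 - y))).congr_deriv ?_
  field_simp
  ring

namespace LogisticLasso

variable {N p : ℕ} (X : Matrix (Fin N) (Fin p) ℝ)

def linPred (b0 : ℝ) (b : Fin p → ℝ) (i : Fin N) : ℝ := b0 + ∑ k, X i k * b k

noncomputable def loss (y : Fin N → ℝ) (b0 : ℝ) (b : Fin p → ℝ) : ℝ :=
  ∑ i, (Real.log (1 + Real.exp (-linPred X b0 b i)) + (1 - y i) * linPred X b0 b i)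

theorem logisticProb_eq (b0 : ℝ) (b : Fin p → ℝ) (i : Fin N) :
    logisticProb X b0 b i = 1 / (1 + Real.exp (-linPred X b0 b i)) := by
  rw [logisticProb, linPred, neg_add]; rfl

theorem logisticObj_eq (y : Fin N → ℝ) (lam b0 : ℝ) (b : Fin p → ℝ) :
    logisticObj X y lam b0 b = loss X y b0 b + lam * ∑ k, |b k| := by
  simp only [logisticObj, loss, logisticProb_eq, ← neg_log_likelihood_sigmoid, sum_neg_distrib]

theorem linPred_update (b0 : ℝ) (b : Fin p → ℝ) (j : Fin p) (t : ℝ) (i : Fin N) :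
    linPred X b0 (update b j t) i =
      b0 + ∑ k ∈ univ.erase j, X i k * b k + X i j * t := by
  rw [linPred, sum_update_eq_add_sum_erase (fun k s => X i k * s)]
  ring

theorem logisticObj_update (y : Fin N → ℝ) (lam b0 : ℝ) (b : Fin p → ℝ) (j : Fin p)
    (t : ℝ) :
    logisticObj X y lam b0 (update b j t) =
      loss X y b0 (update b j t) + lam * |t| + lam * ∑ k ∈ univ.erase j, |b k| := by
  rw [logisticObj_eq, sum_update_eq_add_sum_erase (fun _ s => |s|)]
  ring

theorem hasDerivAt_loss_update (y : Fin N → ℝ) (b0 : ℝ) (b : Fin p → ℝ) (j : Fin p)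
    (t : ℝ) :
    HasDerivAt (fun s => loss X y b0 (update b j s))
      (-∑ i, X i j * (y i - logisticProb X b0 (update b j t) i)) t := by
  rw [← sum_neg_distrib]
  refine HasDerivAt.fun_sum fun i _ => ?_
  have hlin : HasDerivAt (fun s => linPred X b0 (update b j s) i) (X i j) t := by
    simp only [linPred_update]
    simpa using ((hasDerivAt_id t).const_mul (X i j)).const_add
      (b0 + ∑ k ∈ univ.erase j, X i k * b k)
  have hterm := hasDerivAt_log_one_add_exp_neg_add_mul (y i) (linPred X b0 (update b j t) i)
  refine (hterm.comp t hlin).congr_deriv ?_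
  rw [logisticProb_eq]
  ring

end LogisticLasso

open LogisticLasso in
theorem logistic_kkt_exclusion_general {N p : ℕ} (X : Matrix (Fin N) (Fin p) ℝ)
    (y : Fin N → ℝ) (lam : ℝ)
    (bhat0 : ℝ) (bhat : Fin p → ℝ)
    (hmin : ∀ (b0 : ℝ) (b : Fin p → ℝ),
      logisticObj X y lam bhat0 bhat ≤ logisticObj X y lam b0 b)
    (j : Fin p)
    (hj : |∑ i, X i j * (y i - logisticProb X bhat0 bhat i)| < lam) :
    bhat j = 0 := by
  by_contra hne
  have hobj := logisticObj_update X y lam bhat0 bhat j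
  have hobj₀ := hobj (bhat j)
  rw [update_eq_self] at hobj₀
  have hloc : IsLocalMin (fun t => loss X y bhat0 (update bhat j t) + lam * |t|) (bhat j) :=
    Filter.Eventually.of_forall fun t => by
      have := hmin bhat0 (update bhat j t)
      rw [hobj₀, hobj] at this
      simpa using this
  have hderiv := hasDerivAt_loss_update X y bhat0 bhat j (bhat j)
  rw [update_eq_self] at hderiv
  have hcrit := abs_eq_abs_of_isLocalMin_add_mul_abs hloc hderiv hne
  rw [abs_neg] at hcrit
  linarith [le_abs_self lam]

/-- KKT exclusion rule for ℓ₁-penalized logistic regression: if `(β̂₀, β̂)` minimizes the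
penalized negative log-likelihood and `|Σᵢ X_{ij}(yᵢ − pᵢ(β̂₀, β̂))| < λ`, then `β̂_j = 0`. -/
theorem logistic_kkt_exclusion {N p : ℕ} (X : Matrix (Fin N) (Fin p) ℝ)
    (y : Fin N → ℝ) (hy : ∀ i, y i = 0 ∨ y i = 1) (lam : ℝ) (hlam : 0 < lam)
    (bhat0 : ℝ) (bhat : Fin p → ℝ)
    (hmin : ∀ (b0 : ℝ) (b : Fin p → ℝ),
      logisticObj X y lam bhat0 bhat ≤ logisticObj X y lam b0 b)
    (j : Fin p)
    (hj : |∑ i, X i j * (y i - logisticProb X bhat0 bhat i)| < lam) :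
    bhat j = 0 :=
  logistic_kkt_exclusion_general X y lam bhat0 bhat hmin j hj
end

section
/- (Graphical lasso subgradient bound.) Let S be a real symmetric p×p matrix and λ > 0. Suppose Θ̂ is a symmetric positive definite p×p matrix that maximizes the penalized log-likelihood log det Θ − tr(SΘ) − λ Σ_{i≠j} |Θ_{ij}| over symmetric positive definite matrices Θ (the diagonal is not penalized). Let Σ̂ = Θ̂^{-1}. Then Σ̂_{ii} = S_{ii} for every i, and for all i ≠ j: |Σ̂_{ij} − S_{ij}| ≤ λ, with Σ̂_{ij} − S_{ij} = λ·sign(Θ̂_{ij}) whenever Θ̂_{ij} ≠ 0. -/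
open Finset Matrix

/-- The graphical lasso objective `log det Θ − tr(SΘ) − λ Σ_{i≠j} |Θ_{ij}|`
(diagonal unpenalized). -/
noncomputable def glassoObj {p : ℕ} (S : Matrix (Fin p) (Fin p) ℝ) (lam : ℝ)
    (Theta : Matrix (Fin p) (Fin p) ℝ) : ℝ :=
  Real.log Theta.det - (S * Theta).trace -
    lam * ∑ i, ∑ j ∈ Finset.univ.erase i, |Theta i j|

/-!
Perturb the maximizer along a symmetric direction `E`: since positive definiteness is an open
condition, `t ↦ glassoObj S λ (Θ̂ + t • E)` has a local maximum at `t = 0`. By Jacobi's formula the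
smooth part `log det − tr(S ·)` has derivative `tr(Θ̂⁻¹ E) − tr(S E)` there. For `E = eᵢeᵢᵀ` the
penalty does not move, and Fermat's rule gives `Σ̂ᵢᵢ = Sᵢᵢ`. For `E = eᵢeⱼᵀ + eⱼeᵢᵀ` the penalty
moves by `2λ (|Θ̂ᵢⱼ + t| − |Θ̂ᵢⱼ|)`; comparing one-sided difference quotients bounds the derivative
`2 (Σ̂ᵢⱼ − Sᵢⱼ)` by `2λ`, and when `Θ̂ᵢⱼ ≠ 0` the penalty is differentiable and Fermat's rule
pins the derivative to `2λ sign Θ̂ᵢⱼ`.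
-/

open Filter Topology

section OneDim

variable {g : ℝ → ℝ} {a c d : ℝ}

theorem abs_le_of_hasDerivAt_of_isLocalMax_sub_mul_abs (hc : 0 ≤ c) (hg : HasDerivAt g d 0)
    (hmax : IsLocalMax (fun t => g t - c * |a + t|) 0) : |d| ≤ c := by
  have hlip : ∀ᶠ t in 𝓝 0, g t - g 0 ≤ c * |t| := by
    filter_upwards [hmax] with t ht
    simp only [add_zero] at ht
    linarith [mul_le_mul_of_nonneg_left (abs_add_le a t) hc]
  have hright : d ≤ c := by
    refine le_of_tendsto hg.tendsto_slope_zero_right ?_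
    filter_upwards [nhdsWithin_le_nhds hlip, self_mem_nhdsWithin] with t ht (htpos : 0 < t)
    rw [zero_add, smul_eq_mul, inv_mul_le_iff₀ htpos]
    rwa [abs_of_pos htpos, mul_comm] at ht
  have hleft : -c ≤ d := by
    refine ge_of_tendsto hg.tendsto_slope_zero_left ?_
    filter_upwards [nhdsWithin_le_nhds hlip, self_mem_nhdsWithin] with t ht (htneg : t < 0)
    rw [zero_add, smul_eq_mul, inv_mul_eq_div, le_div_iff_of_neg htneg]
    rw [abs_of_neg htneg] at ht
    linarith
  exact abs_le.2 ⟨hleft, hright⟩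

theorem eq_mul_sign_of_hasDerivAt_of_isLocalMax_sub_mul_abs (hg : HasDerivAt g d 0)
    (hmax : IsLocalMax (fun t => g t - c * |a + t|) 0) (ha : a ≠ 0) : d = c * Real.sign a := by
  have habs : HasDerivAt (fun t => |a + t|) (Real.sign a) 0 := by
    rcases ha.lt_or_gt with ha | ha
    · rw [Real.sign_of_neg ha]
      exact (hasDerivAt_abs_neg (by simpa using ha)).comp_const_add a 0
    · rw [Real.sign_of_pos ha]
      exact (hasDerivAt_abs_pos (by simpa using ha)).comp_const_add a 0
  linarith [hmax.hasDerivAt_eq_zero (hg.sub (habs.const_mul c))]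

end OneDim

section MatrixAnalysis

variable {n : Type*}

theorem Matrix.PosDef.isSymm {A : Matrix n n ℝ} (hA : A.PosDef) : A.IsSymm :=
  isHermitian_iff_isSymm.1 hA.isHermitian

variable [Fintype n]

theorem Matrix.PosDef.eventually_of_continuous {X : Type*} [TopologicalSpace X]
    {M : X → Matrix n n ℝ} (hM : Continuous M) (hH : ∀ x, (M x).IsHermitian) {x₀ : X}
    (h₀ : (M x₀).PosDef) : ∀ᶠ x in 𝓝 x₀, (M x).PosDef := by
  have hq : Continuous fun p : X × (n → ℝ) => p.2 ⬝ᵥ (M p.1 *ᵥ p.2) :=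
    continuous_snd.dotProduct ((hM.comp continuous_fst).matrix_mulVec continuous_snd)
  have hsphere : ∀ᶠ x in 𝓝 x₀, ∀ v ∈ Metric.sphere (0 : n → ℝ) 1, 0 < v ⬝ᵥ (M x *ᵥ v) := by
    refine (isCompact_sphere 0 1).eventually_forall_of_forall_eventually fun v hv => ?_
    have hv0 : v ≠ 0 := ne_zero_of_mem_unit_sphere ⟨v, hv⟩
    exact (hq.tendsto (x₀, v)).eventually
      (lt_mem_nhds (by simpa using h₀.dotProduct_mulVec_pos hv0))
  filter_upwards [hsphere] with x hx
  refine .of_dotProduct_mulVec_pos (hH x) fun v hv => ?_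
  have hnorm : 0 < ‖v‖ := norm_pos_iff.2 hv
  have hunit : ‖v‖⁻¹ • v ∈ Metric.sphere (0 : n → ℝ) 1 := by
    simp [norm_smul, hnorm.ne']
  have hpos := hx _ hunit
  rw [mulVec_smul, dotProduct_smul, smul_dotProduct, smul_eq_mul, smul_eq_mul] at hpos
  have hinv : 0 ≤ ‖v‖⁻¹ := inv_nonneg.2 hnorm.le
  rw [star_trivial]
  exact pos_of_mul_pos_right (pos_of_mul_pos_right hpos hinv) hinv

variable {𝕜 : Type*} [NontriviallyNormedField 𝕜] [DecidableEq n]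

theorem hasDerivAt_det_one_add_smul (M : Matrix n n 𝕜) :
    HasDerivAt (fun t : 𝕜 => (1 + t • M).det) M.trace 0 := by
  have h := (det (1 + (Polynomial.X : Polynomial 𝕜) • M.map Polynomial.C)).hasDerivAt 0
  rw [derivative_det_one_add_X_smul] at h
  convert h using 1
  ext t
  simp [eval_det, ← smul_eq_mul_diagonal]

theorem hasDerivAt_det_add_smul {A : Matrix n n 𝕜} (hA : IsUnit A.det) (E : Matrix n n 𝕜) :
    HasDerivAt (fun t : 𝕜 => (A + t • E).det) (A.det * (A⁻¹ * E).trace) 0 := by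
  have hfac : ∀ t : 𝕜, A + t • E = A * (1 + t • (A⁻¹ * E)) := fun t => by
    rw [mul_add, mul_one, Matrix.mul_smul, mul_nonsing_inv_cancel_left _ _ hA]
  simp_rw [hfac, det_mul]
  exact (hasDerivAt_det_one_add_smul _).const_mul _

theorem hasDerivAt_log_det_sub_trace_mul {A : Matrix n n ℝ} (hA : A.det ≠ 0)
    (S E : Matrix n n ℝ) :
    HasDerivAt (fun t : ℝ => Real.log (A + t • E).det - (S * (A + t • E)).trace)
      ((A⁻¹ * E).trace - (S * E).trace) 0 := by
  have hlog := (hasDerivAt_det_add_smul hA.isUnit E).log (by simpa using hA)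
  have htrace : HasDerivAt (fun t : ℝ => (S * (A + t • E)).trace) (S * E).trace 0 := by
    simp only [Matrix.mul_add, Matrix.mul_smul, trace_add, trace_smul, smul_eq_mul]
    simpa using ((hasDerivAt_id (0 : ℝ)).mul_const (S * E).trace).const_add (S * A).trace
  exact (hlog.sub htrace).congr_deriv (by simp [hA])

def offDiagAbsSum (A : Matrix n n ℝ) : ℝ := ∑ i, ∑ j ∈ univ.erase i, |A i j|

theorem offDiagAbsSum_add_smul_single_self (A : Matrix n n ℝ) (i : n) (t : ℝ) :
    offDiagAbsSum (A + t • single i i (1 : ℝ)) = offDiagAbsSum A := by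
  refine sum_congr rfl fun k _ => sum_congr rfl fun l hl => ?_
  have hlk : l ≠ k := ne_of_mem_erase hl
  simp only [Matrix.add_apply, Matrix.smul_apply, single_apply, smul_eq_mul]
  rw [if_neg fun h => hlk (h.2.symm.trans h.1), mul_zero, add_zero]

theorem offDiagAbsSum_add_smul_single_add_single {A : Matrix n n ℝ} (hA : A.IsSymm) {i j : n}
    (hij : i ≠ j) (t : ℝ) :
    offDiagAbsSum (A + t • (single i j (1 : ℝ) + single j i 1)) =
      offDiagAbsSum A + 2 * (|A i j + t| - |A i j|) := by
  set E : Matrix n n ℝ := single i j 1 + single j i 1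
  set f : n → n → ℝ := fun k l => |(A + t • E) k l| - |A k l|
  have hf : ∀ k l, ¬(k = i ∧ l = j) → ¬(k = j ∧ l = i) → f k l = 0 := by
    intro k l h₁ h₂
    simp only [f, E, Matrix.add_apply, Matrix.smul_apply, single_apply, smul_eq_mul]
    rw [if_neg fun h => h₁ ⟨h.1.symm, h.2.symm⟩, if_neg fun h => h₂ ⟨h.1.symm, h.2.symm⟩]
    simp
  have hdiff : offDiagAbsSum (A + t • E) - offDiagAbsSum A = ∑ k, ∑ l ∈ univ.erase k, f k l := by
    simp only [offDiagAbsSum, f, ← sum_sub_distrib]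
  have hrow : ∀ k, k ≠ i → k ≠ j → ∑ l ∈ univ.erase k, f k l = 0 := fun k hki hkj =>
    sum_eq_zero fun l _ => hf k l (fun h => hki h.1) (fun h => hkj h.1)
  have hsum : ∑ k, ∑ l ∈ univ.erase k, f k l = f i j + f j i := by
    rw [sum_eq_add_of_mem i j (mem_univ _) (mem_univ _) hij fun k _ hk => hrow k hk.1 hk.2,
      sum_eq_single_of_mem j (mem_erase.2 ⟨hij.symm, mem_univ _⟩)
        fun l _ hl => hf i l (fun h => hl h.2) (fun h => hij h.1),
      sum_eq_single_of_mem i (mem_erase.2 ⟨hij, mem_univ _⟩)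
        fun l _ hl => hf j l (fun h => hij h.1.symm) (fun h => hl h.2)]
  have hfij : f i j = |A i j + t| - |A i j| := by simp [f, E, single_apply, hij]
  have hfji : f j i = |A i j + t| - |A i j| := by simp [f, E, single_apply, hij, hA.apply i j]
  linarith

end MatrixAnalysis

section Glasso

variable {p : ℕ}

theorem glassoObj_eq (S : Matrix (Fin p) (Fin p) ℝ) (lam : ℝ)
    (Θ : Matrix (Fin p) (Fin p) ℝ) :
    glassoObj S lam Θ = Real.log Θ.det - (S * Θ).trace - lam * offDiagAbsSum Θ := rfl

theorem isLocalMax_glassoObj_add_smul {S That E : Matrix (Fin p) (Fin p) ℝ} {lam : ℝ}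
    (hpd : That.PosDef)
    (hmax : ∀ Θ : Matrix (Fin p) (Fin p) ℝ, Θ.IsSymm → Θ.PosDef →
      glassoObj S lam Θ ≤ glassoObj S lam That) (hE : E.IsSymm) :
    IsLocalMax (fun t : ℝ => glassoObj S lam (That + t • E)) 0 := by
  have hsymm := hpd.isSymm
  have hline : Continuous fun t : ℝ => That + t • E := by fun_prop
  have hherm : ∀ t : ℝ, (That + t • E).IsHermitian := fun t =>
    isHermitian_iff_isSymm.2 (hsymm.add (hE.smul t))
  filter_upwards [PosDef.eventually_of_continuous hline hherm (by simpa using hpd)] with t ht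
  simpa using hmax _ (hsymm.add (hE.smul t)) ht

theorem inv_apply_self_eq_of_glassoObj_max {S That : Matrix (Fin p) (Fin p) ℝ} {lam : ℝ}
    (hpd : That.PosDef)
    (hmax : ∀ Θ : Matrix (Fin p) (Fin p) ℝ, Θ.IsSymm → Θ.PosDef →
      glassoObj S lam Θ ≤ glassoObj S lam That) (i : Fin p) :
    That⁻¹ i i = S i i := by
  have hE : (single i i (1 : ℝ)).IsSymm := transpose_single i i 1
  have hderiv : HasDerivAt (fun t : ℝ => glassoObj S lam (That + t • single i i 1))
      (That⁻¹ i i - S i i) 0 := by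
    simp only [glassoObj_eq, offDiagAbsSum_add_smul_single_self]
    exact ((hasDerivAt_log_det_sub_trace_mul hpd.det_pos.ne' S _).sub_const _).congr_deriv
      (by simp [trace_mul_single])
  linarith [(isLocalMax_glassoObj_add_smul hpd hmax hE).hasDerivAt_eq_zero hderiv]

theorem abs_inv_apply_sub_le_and_eq_sign_of_glassoObj_max {S That : Matrix (Fin p) (Fin p) ℝ}
    {lam : ℝ} (hS : S.IsSymm) (hlam : 0 ≤ lam) (hpd : That.PosDef)
    (hmax : ∀ Θ : Matrix (Fin p) (Fin p) ℝ, Θ.IsSymm → Θ.PosDef →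
      glassoObj S lam Θ ≤ glassoObj S lam That) {i j : Fin p} (hij : i ≠ j) :
    |That⁻¹ i j - S i j| ≤ lam ∧
      (That i j ≠ 0 → That⁻¹ i j - S i j = lam * Real.sign (That i j)) := by
  have hsymm := hpd.isSymm
  set E : Matrix (Fin p) (Fin p) ℝ := single i j 1 + single j i 1
  have hE : E.IsSymm := by rw [IsSymm, transpose_add, transpose_single, transpose_single, add_comm]
  -- everything in the objective along the line except the moving penalty `2λ |Θ̂ᵢⱼ + t|`
  set g : ℝ → ℝ := fun t => Real.log (That + t • E).det - (S * (That + t • E)).trace -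
    lam * offDiagAbsSum That + 2 * lam * |That i j|
  have hg : HasDerivAt g (2 * (That⁻¹ i j - S i j)) 0 := by
    refine (((hasDerivAt_log_det_sub_trace_mul hpd.det_pos.ne' S E).sub_const _).add_const
      _).congr_deriv ?_
    simp [E, Matrix.mul_add, trace_mul_single, hS.apply i j, hsymm.inv.apply i j]
    ring
  have hloc : IsLocalMax (fun t => g t - 2 * lam * |That i j + t|) 0 := by
    convert isLocalMax_glassoObj_add_smul hpd hmax hE using 2 with t
    rw [glassoObj_eq, offDiagAbsSum_add_smul_single_add_single hsymm hij]
    ring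
  have hbound := abs_le_of_hasDerivAt_of_isLocalMax_sub_mul_abs (by positivity) hg hloc
  refine ⟨?_, fun hθ => ?_⟩
  · rw [abs_mul, abs_two] at hbound
    linarith
  · linarith [eq_mul_sign_of_hasDerivAt_of_isLocalMax_sub_mul_abs hg hloc hθ]

end Glasso

theorem graphical_lasso_subgradient_general {p : ℕ} (S : Matrix (Fin p) (Fin p) ℝ)
    (hS : S.IsSymm) (lam : ℝ) (hlam : 0 < lam)
    (That : Matrix (Fin p) (Fin p) ℝ) (hpd : That.PosDef)
    (hmax : ∀ Theta : Matrix (Fin p) (Fin p) ℝ, Theta.IsSymm → Theta.PosDef →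
      glassoObj S lam Theta ≤ glassoObj S lam That) :
    (∀ i : Fin p, That⁻¹ i i = S i i) ∧
    (∀ i j : Fin p, i ≠ j →
      |That⁻¹ i j - S i j| ≤ lam ∧
      (That i j ≠ 0 → That⁻¹ i j - S i j = lam * Real.sign (That i j))) :=
  ⟨inv_apply_self_eq_of_glassoObj_max hpd hmax,
    fun _ _ hij => abs_inv_apply_sub_le_and_eq_sign_of_glassoObj_max hS hlam.le hpd hmax hij⟩

/-- Graphical lasso subgradient bound: if `Θ̂` maximizes the penalized log-likelihood
over symmetric positive definite matrices and `Σ̂ = Θ̂⁻¹`, then `Σ̂_{ii} = S_{ii}`,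
`|Σ̂_{ij} − S_{ij}| ≤ λ` for `i ≠ j`, and `Σ̂_{ij} − S_{ij} = λ·sign(Θ̂_{ij})` whenever
`Θ̂_{ij} ≠ 0`. -/
theorem graphical_lasso_subgradient {p : ℕ} (S : Matrix (Fin p) (Fin p) ℝ)
    (hS : S.IsSymm) (lam : ℝ) (hlam : 0 < lam)
    (That : Matrix (Fin p) (Fin p) ℝ) (hsymm : That.IsSymm) (hpd : That.PosDef)
    (hmax : ∀ Theta : Matrix (Fin p) (Fin p) ℝ, Theta.IsSymm → Theta.PosDef →
      glassoObj S lam Theta ≤ glassoObj S lam That) :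
    (∀ i : Fin p, That⁻¹ i i = S i i) ∧
    (∀ i j : Fin p, i ≠ j →
      |That⁻¹ i j - S i j| ≤ lam ∧
      (That i j ≠ 0 → That⁻¹ i j - S i j = lam * Real.sign (That i j))) :=
  graphical_lasso_subgradient_general S hS lam hlam That hpd hmax
end
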